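/- arXiv:1409.4927 — 3 statements merged into one kernel-verified Lean document; each statement's English description precedes it below -/
import Mathlib

section
/- Let D = {z ∈ ℂ : ‖z‖ ≤ 1} be the closed unit disc and let g : D \ {0} → ℝ be continuous. Suppose for some u₀ ∈ ℝ the fiber g⁻¹({u₀}) is nonempty and connected, and that 0 does not belong to the closure (in ℂ) of g⁻¹({u₀}). Then g is not surjective onto ℝ. -/
/-!
Choose `ε ≤ 1` so that the ball of radius `ε` about `0` misses the fiber over `u₀`. The punctured
ball is connected, so `g` stays on one side of `u₀` there, while on the compact annulus
`ε ≤ ‖z‖ ≤ 1` it is bounded. Hence `g` is bounded above or below, and cannot be onto `ℝ`.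
-/

open Set Metric

theorem IsPreconnected.bddAbove_or_bddBelow_of_notMem {α : Type*} [LinearOrder α]
    [TopologicalSpace α] [OrderClosedTopology α] {s : Set α} (hs : IsPreconnected s) {u : α}
    (hu : u ∉ s) : BddAbove s ∨ BddBelow s := by
  by_contra! h
  obtain ⟨b, hb, hub⟩ := not_bddAbove_iff.1 h.1 u
  obtain ⟨a, ha, hau⟩ := not_bddBelow_iff.1 h.2 u
  exact hu (hs.Icc_subset ha hb ⟨hau.le, hub.le⟩)

theorem bddAbove_or_bddBelow_range_of_union_eq_univ {X : Type*} [TopologicalSpace X]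
    {f : X → ℝ} (hf : Continuous f) {K P : Set X} (hK : IsCompact K) (hP : IsPreconnected P)
    (hKP : K ∪ P = univ) {u : ℝ} (hu : u ∉ f '' P) : BddAbove (range f) ∨ BddBelow (range f) := by
  have hrange : range f = f '' K ∪ f '' P := by rw [← image_union, hKP, image_univ]
  have hfK : IsCompact (f '' K) := hK.image hf
  rw [hrange, bddAbove_union, bddBelow_union]
  rcases (hP.image f hf.continuousOn).bddAbove_or_bddBelow_of_notMem hu with h | h
  exacts [.inl ⟨hfK.bddAbove, h⟩, .inr ⟨hfK.bddBelow, h⟩]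

section PuncturedBall

variable {E : Type*} [NormedAddCommGroup E] [NormedSpace ℝ E]

theorem isPreconnected_ball_diff_singleton (h : 1 < Module.rank ℝ E) (x : E) (r : ℝ) :
    IsPreconnected (ball x r \ {x}) := by
  have hpolar : (fun p : ℝ × E ↦ x + p.1 • p.2) '' (Ioo 0 r ×ˢ sphere 0 1) = ball x r \ {x} := by
    ext w
    constructor
    · rintro ⟨⟨t, v⟩, ⟨⟨ht, htr⟩, hv⟩, rfl⟩
      rw [mem_sphere_zero_iff_norm] at hv
      have hv0 : v ≠ 0 := norm_ne_zero_iff.1 (by rw [hv]; exact one_ne_zero)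
      simp [norm_smul, abs_of_pos ht, hv, htr, ht.ne', hv0]
    · rintro ⟨hw, hwx⟩
      rw [mem_ball_iff_norm] at hw
      have hw0 : 0 < ‖w - x‖ := norm_pos_iff.2 (sub_ne_zero.2 hwx)
      refine ⟨(‖w - x‖, ‖w - x‖⁻¹ • (w - x)), ⟨⟨hw0, hw⟩, ?_⟩, ?_⟩
      · simp [norm_smul, hw0.ne']
      · simp [smul_smul, hw0.ne']
  rw [← hpolar]
  exact (isPreconnected_Ioo.prod (isPreconnected_sphere h 0 1)).image _
    (continuous_const.add (continuous_fst.smul continuous_snd)).continuousOn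

theorem isPreconnected_setOf_norm_lt_of_le_one (h : 1 < Module.rank ℝ E) {ε : ℝ} (hε : ε ≤ 1) :
    IsPreconnected {x : {z : E // ‖z‖ ≤ 1 ∧ z ≠ 0} | ‖(x : E)‖ < ε} := by
  refine Topology.IsInducing.subtypeVal.isPreconnected_image.1 ?_
  convert isPreconnected_ball_diff_singleton h 0 ε using 1
  ext z
  simp only [mem_image, Subtype.exists, exists_and_right, exists_eq_right, mem_sdiff,
    mem_ball_zero_iff, mem_singleton_iff]
  exact ⟨fun ⟨⟨_, hz⟩, hzε⟩ ↦ ⟨hzε, hz⟩, fun ⟨hzε, hz⟩ ↦ ⟨⟨hzε.le.trans hε, hz⟩, hzε⟩⟩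

end PuncturedBall

theorem isCompact_setOf_le_norm {E : Type*} [NormedAddCommGroup E] [ProperSpace E] {ε : ℝ}
    (hε : 0 < ε) :
    IsCompact {x : {z : E // ‖z‖ ≤ 1 ∧ z ≠ 0} | ε ≤ ‖(x : E)‖} := by
  rw [Topology.IsEmbedding.subtypeVal.isCompact_iff]
  convert (isCompact_closedBall (0 : E) 1).inter_right
    (isClosed_le continuous_const continuous_norm) using 1
  ext z
  simp only [mem_image, mem_ofPred_eq, Subtype.exists, exists_and_right, exists_eq_right,
    mem_inter_iff, mem_closedBall_zero_iff]
  refine ⟨fun ⟨⟨hz, _⟩, hεz⟩ ↦ ⟨hz, hεz⟩, fun ⟨hz, hεz⟩ ↦ ⟨⟨hz, ?_⟩, hεz⟩⟩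
  rintro rfl
  exact (norm_zero (E := E) ▸ hεz).not_gt hε

theorem not_surjective_of_connected_fiber_avoiding_singularity_general
    (g : {z : ℂ // ‖z‖ ≤ 1 ∧ z ≠ 0} → ℝ) (hg : Continuous g) (u₀ : ℝ)
    (h0 : (0 : ℂ) ∉ closure (Subtype.val '' (g ⁻¹' {u₀}))) :
    ¬ Function.Surjective g := by
  intro hsurj
  obtain ⟨ε, hε, hfar⟩ : ∃ ε > 0, ∀ z ∈ Subtype.val '' (g ⁻¹' {u₀}), ε ≤ dist 0 z := by
    simpa [Metric.mem_closure_iff] using h0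
  set δ := min ε 1
  have hu₀ : u₀ ∉ g '' {x | ‖(x : ℂ)‖ < δ} := by
    rintro ⟨x, hx, hgx⟩
    have := hfar x ⟨x, hgx, rfl⟩
    rw [dist_zero_left] at this
    exact (hx.trans_le (min_le_left ε 1)).not_ge this
  have hcover : {x : {z : ℂ // ‖z‖ ≤ 1 ∧ z ≠ 0} | δ ≤ ‖(x : ℂ)‖} ∪ {x | ‖(x : ℂ)‖ < δ} = univ :=
    eq_univ_of_forall fun x ↦ le_or_gt δ ‖(x : ℂ)‖
  have hrank : 1 < Module.rank ℝ ℂ := by simp [Complex.rank_real_complex]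
  have hbdd := bddAbove_or_bddBelow_range_of_union_eq_univ hg
    (isCompact_setOf_le_norm (lt_min hε one_pos))
    (isPreconnected_setOf_norm_lt_of_le_one hrank (min_le_right ε 1)) hcover hu₀
  rw [hsurj.range_eq] at hbdd
  exact hbdd.elim not_bddAbove_univ not_bddBelow_univ

/-- If `g` is continuous on the punctured closed unit disc, and for some value `u₀` the
fiber `g⁻¹ {u₀}` is nonempty and connected with `0` not in its closure (in `ℂ`), then
`g` is not surjective onto `ℝ`. -/
theorem not_surjective_of_connected_fiber_avoiding_singularity
    (g : {z : ℂ // ‖z‖ ≤ 1 ∧ z ≠ 0} → ℝ) (hg : Continuous g) (u₀ : ℝ)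
    (hconn : IsConnected (g ⁻¹' {u₀}))
    (h0 : (0 : ℂ) ∉ closure (Subtype.val '' (g ⁻¹' {u₀}))) :
    ¬ Function.Surjective g :=
  not_surjective_of_connected_fiber_avoiding_singularity_general g hg u₀ h0
end

section
/- Fix α > 0 and define g : ℝ² \ {0} → ℝ (with its Euclidean inner product) by g(x, y) = x / (x² + y²)^((α+1)/2), the dipolar spatial-frequency map, and let the orientation map be θ(r e^{iφ}) = φ/2, whose gradient at z = (r cos φ, r sin φ) points in the unit direction u = (−sin φ, cos φ). Then for every r > 0 and φ ∈ ℝ, the cosine of the intersection angle ψ between the iso-orientation and iso-spatial-frequency level lines satisfies |⟪∇g(z), u⟫| · √(α² cos²(φ) + sin²(φ)) = ‖∇g(z)‖ · |sin(φ)|; i.e., cos ψ = |sin(φ)| / √(α² cos²(φ) + sin²(φ)). -/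
/-!
In a real inner product space the dipole potential `y ↦ ⟪a, y⟫ / ‖y‖ ^ p` has gradient
`‖x‖⁻ᵖ • (a - (p ⟪a, x⟫ / ‖x‖²) • x)` at `x ≠ 0`. For `g = γ_α` take `a = e₀` and `p = α + 1`
at `x = r e^{iφ}`: the radial part of the gradient is orthogonal to the pinwheel direction `u`,
so `⟪∇g, u⟫ = -sin φ / r^(α+1)`, while `‖∇g‖² = (1 + (α² - 1) cos² φ) / r^(2(α+1))`.
-/

open scoped RealInnerProductSpace

noncomputable def dipole (α : ℝ) (v : EuclideanSpace ℝ (Fin 2)) : ℝ :=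
  v 0 / (v 0 ^ 2 + v 1 ^ 2) ^ ((α + 1) / 2)

section InnerProductSpace

variable {E : Type*} [NormedAddCommGroup E] [InnerProductSpace ℝ E]

theorem hasGradientAt_inner_div_norm_rpow [CompleteSpace E] (a : E) (p : ℝ) {x : E}
    (hx : x ≠ 0) :
    HasGradientAt (fun y => ⟪a, y⟫ / ‖y‖ ^ p)
      ((‖x‖ ^ p)⁻¹ • (a - (p * ⟪a, x⟫ / ‖x‖ ^ 2) • x)) x := by
  have hpow (y : E) : (‖y‖ ^ 2) ^ (-(p / 2)) = (‖y‖ ^ p)⁻¹ := by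
    rw [← Real.rpow_natCast_mul (norm_nonneg y), ← Real.rpow_neg (norm_nonneg y)]
    ring_nf
  have hpow_sub_one : (‖x‖ ^ 2) ^ (-(p / 2) - 1) = (‖x‖ ^ p)⁻¹ / ‖x‖ ^ 2 := by
    rw [Real.rpow_sub_one (by positivity), hpow]
  have hderiv := ((innerSL ℝ a).hasFDerivAt (x := x)).mul
    ((hasStrictFDerivAt_norm_sq x).hasFDerivAt.rpow_const (p := -(p / 2))
      (Or.inl (by positivity)))
  simp only [hpow] at hderiv
  rw [hasGradientAt_iff_hasFDerivAt]
  refine hderiv.congr_fderiv (ContinuousLinearMap.ext fun v => ?_)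
  simp only [add_apply, smul_apply, coe_innerSL_apply, InnerProductSpace.toDual_apply_apply,
    real_inner_smul_left, inner_sub_left, smul_eq_mul, nsmul_eq_mul, hpow_sub_one]
  ring

theorem norm_sub_smul_sq_of_inner (a : E) (p : ℝ) {x : E} (hx : x ≠ 0) :
    ‖a - (p * ⟪a, x⟫ / ‖x‖ ^ 2) • x‖ ^ 2 = ‖a‖ ^ 2 + (p ^ 2 - 2 * p) * (⟪a, x⟫ / ‖x‖) ^ 2 := by
  have hN : ‖x‖ ≠ 0 := norm_ne_zero_iff.mpr hx
  rw [norm_sub_sq_real, real_inner_smul_right, norm_smul, Real.norm_eq_abs, mul_pow, sq_abs]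
  field_simp
  ring

end InnerProductSpace

theorem dipole_eq_inner_div_norm_rpow (α : ℝ) :
    dipole α = fun v => ⟪EuclideanSpace.single 0 1, v⟫ / ‖v‖ ^ (α + 1) := by
  funext v
  rw [EuclideanSpace.inner_single_left, EuclideanSpace.norm_eq, Fin.sum_univ_two,
    Real.sqrt_eq_rpow, ← Real.rpow_mul (by positivity), one_div_mul_eq_div]
  simp [dipole]

theorem norm_polar (r φ : ℝ) (hr : 0 ≤ r) : ‖!₂[r * Real.cos φ, r * Real.sin φ]‖ = r := by
  rw [EuclideanSpace.norm_eq, Fin.sum_univ_two]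
  simp only [Matrix.cons_val_zero, Matrix.cons_val_one, Matrix.cons_val_fin_one, norm_mul,
    Real.norm_eq_abs, mul_pow, sq_abs]
  rw [← mul_add, Real.cos_sq_add_sin_sq, mul_one, Real.sqrt_sq hr]

theorem inner_polar_rotation_eq_zero (r φ : ℝ) :
    ⟪!₂[r * Real.cos φ, r * Real.sin φ], (!₂[-Real.sin φ, Real.cos φ] : EuclideanSpace ℝ (Fin 2))⟫
      = 0 := by
  simp only [PiLp.inner_apply, RCLike.inner_apply, Real.ringHom_apply, Fin.sum_univ_two,
    Matrix.cons_val_zero, Matrix.cons_val_one, Matrix.cons_val_fin_one]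
  ring

theorem dipole_pinwheel_intersection_angle_general (α : ℝ) :
    ∀ r φ : ℝ, 0 < r →
      |⟪gradient (dipole α) !₂[r * Real.cos φ, r * Real.sin φ],
          (!₂[-Real.sin φ, Real.cos φ] : EuclideanSpace ℝ (Fin 2))⟫| *
          Real.sqrt (α ^ 2 * Real.cos φ ^ 2 + Real.sin φ ^ 2) =
        ‖gradient (dipole α) !₂[r * Real.cos φ, r * Real.sin φ]‖ * |Real.sin φ| := by
  intro r φ hr
  set x : EuclideanSpace ℝ (Fin 2) := !₂[r * Real.cos φ, r * Real.sin φ]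
  set u : EuclideanSpace ℝ (Fin 2) := !₂[-Real.sin φ, Real.cos φ]
  set e : EuclideanSpace ℝ (Fin 2) := EuclideanSpace.single 0 1
  have hx : ‖x‖ = r := norm_polar r φ hr.le
  have hx0 : x ≠ 0 := norm_ne_zero_iff.mp (hx ▸ hr.ne')
  have hgrad := (hasGradientAt_inner_div_norm_rpow e (α + 1) hx0).gradient
  rw [← dipole_eq_inner_div_norm_rpow] at hgrad
  have hinner : ⟪gradient (dipole α) x, u⟫ = (r ^ (α + 1))⁻¹ * -Real.sin φ := by
    rw [hgrad, real_inner_smul_left, inner_sub_left, real_inner_smul_left,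
      inner_polar_rotation_eq_zero, hx, mul_zero, sub_zero]
    simp [e, u, EuclideanSpace.inner_single_left]
  have hnorm : ‖gradient (dipole α) x‖ =
      (r ^ (α + 1))⁻¹ * Real.sqrt (α ^ 2 * Real.cos φ ^ 2 + Real.sin φ ^ 2) := by
    have hex : ⟪e, x⟫ = r * Real.cos φ := by simp [e, x, EuclideanSpace.inner_single_left]
    rw [hgrad, norm_smul, ← Real.sqrt_sq (norm_nonneg (_ - _)),
      norm_sub_smul_sq_of_inner e (α + 1) hx0, hex, hx, mul_div_cancel_left₀ _ hr.ne',
      Real.norm_of_nonneg (by positivity), PiLp.norm_single, norm_one]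
    congr 2
    linear_combination -Real.sin_sq_add_cos_sq φ
  rw [hinner, hnorm, abs_mul, abs_neg, abs_of_pos (by positivity)]
  ring

/-- The intersection angle `ψ` between iso-orientation lines (rays of the pinwheel
`r e^{iφ} ↦ φ/2`, whose gradient direction is the unit vector `u = (−sin φ, cos φ)`)
and iso-spatial-frequency lines of the dipole `g = γ_α` satisfies
`cos ψ = |⟪∇g, u⟫|/‖∇g‖ = |sin φ| / √(α² cos²φ + sin²φ)`. -/
theorem dipole_pinwheel_intersection_angle (α : ℝ) (hα : 0 < α) :
    ∀ r φ : ℝ, 0 < r →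
      |⟪gradient (dipole α) !₂[r * Real.cos φ, r * Real.sin φ],
          (!₂[-Real.sin φ, Real.cos φ] : EuclideanSpace ℝ (Fin 2))⟫| *
          Real.sqrt (α ^ 2 * Real.cos φ ^ 2 + Real.sin φ ^ 2) =
        ‖gradient (dipole α) !₂[r * Real.cos φ, r * Real.sin φ]‖ * |Real.sin φ| :=
  dipole_pinwheel_intersection_angle_general α
end

section
/- Fix α > 0 and define h : ℝ → ℝ by h(φ) = arccos( |sin φ| / √(α² cos²(φ) + sin²(φ)) ). Let μ be the uniform probability measure on the interval (0, π) (i.e., (1/π) times Lebesgue measure restricted to (0, π)). Then the pushforward measure h_*μ equals the measure on ℝ with density ψ ↦ 2α / (π·((α² − 1)·cos²(ψ) + 1)) with respect to Lebesgue measure restricted to the interval (0, π/2). -/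
/-!
`h` is symmetric about `π/2`, so the uniform measure on `(0, π)` pushes forward to twice the
image of Lebesgue measure on `(0, π/2)`. There `h φ = arctan (α cot φ)`, an involution of
`(0, π/2)` with `|h'| = α / (α² cos² + sin²)`. For an involution the preimage of a set is its
image, so the change of variables formula turns the image measure into this density.
-/

open MeasureTheory Measure Real Set
open scoped ENNReal

section Involution

variable {E : Type*} [NormedAddCommGroup E] [NormedSpace ℝ E] [FiniteDimensional ℝ E]
  [MeasurableSpace E] [BorelSpace E] (μ : Measure E) [μ.IsAddHaarMeasure]

theorem map_restrict_eq_withDensity_of_leftInvOn {s : Set E} {f : E → E} {f' : E → E →L[ℝ] E}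
    (hs : MeasurableSet s) (hmaps : MapsTo f s s) (hinv : LeftInvOn f f s)
    (hf' : ∀ x ∈ s, HasFDerivWithinAt f (f' x) s x) :
    (μ.restrict s).map f = (μ.restrict s).withDensity fun x => ENNReal.ofReal |(f' x).det| := by
  have hfmeas : AEMeasurable f (μ.restrict s) :=
    ContinuousOn.aemeasurable (fun x hx => (hf' x hx).continuousWithinAt) hs
  ext t ht
  have himage : f '' (t ∩ s) = f ⁻¹' t ∩ s := by
    rw [hinv.image_inter', (InvOn.bijOn ⟨hinv, hinv⟩ hmaps hmaps).image_eq]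
  rw [map_apply_of_aemeasurable hfmeas ht, restrict_apply' hs, withDensity_apply _ ht,
    restrict_restrict ht, lintegral_abs_det_fderiv_eq_addHaar_image μ (ht.inter hs)
      (fun x hx => (hf' x hx.2).mono inter_subset_right) (hinv.injOn.mono inter_subset_right),
    himage]

end Involution

theorem map_restrict_Ioo_eq_two_smul_of_reflect {β : Type*} [MeasurableSpace β] {f : ℝ → β}
    (hf : Measurable f) {a b : ℝ} (hab : a ≤ b) (hsymm : ∀ x, f (a + b - x) = f x) :
    (volume.restrict (Ioo a b)).map f =
      (2 : ℝ≥0∞) • (volume.restrict (Ioo a ((a + b) / 2))).map f := by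
  set m := (a + b) / 2 with hm
  have hsplit :
      volume.restrict (Ioo a b) = volume.restrict (Ioc a m) + volume.restrict (Ioc m b) := by
    rw [restrict_congr_set Ioo_ae_eq_Ioc, ← Ioc_union_Ioc_eq_Ioc (b := m) (by linarith [hm])
      (by linarith [hm]), restrict_union (Ioc_disjoint_Ioc_of_le le_rfl) measurableSet_Ioc]
  have hreflect : (volume.restrict (Ico a m)).map (a + b - ·) = volume.restrict (Ioc m b) := by
    have hpre : (a + b - ·) ⁻¹' Ioc m b = Ico a m := by
      rw [preimage_const_sub_Ioc]
      congr 1 <;> ring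
    rw [← hpre]
    exact ((measurePreserving_sub_left volume (a + b)).restrict_preimage measurableSet_Ioc).map_eq
  have hfix : f ∘ (a + b - ·) = f := funext hsymm
  rw [hsplit, Measure.map_add _ _ hf, ← hreflect, map_map hf (measurable_const_sub _), hfix,
    restrict_congr_set (Ioo_ae_eq_Ioc (a := a) (b := m)).symm,
    restrict_congr_set (Ioo_ae_eq_Ico (a := a) (b := m)).symm, two_smul]

/-- On `(0, π/2)` this is the angle `h` of the statement, written so that it is visibly an
involution. -/
noncomputable def arctanMulCot (α φ : ℝ) : ℝ := arctan (α * (cos φ / sin φ))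

theorem mapsTo_arctanMulCot {α : ℝ} (hα : 0 < α) :
    MapsTo (arctanMulCot α) (Ioo 0 (π / 2)) (Ioo 0 (π / 2)) := by
  intro φ hφ
  have hs : 0 < sin φ := sin_pos_of_pos_of_lt_pi hφ.1 (by linarith [hφ.2, pi_pos])
  have hc : 0 < cos φ := cos_pos_of_mem_Ioo ⟨by linarith [hφ.1, pi_pos], hφ.2⟩
  exact ⟨arctan_pos.2 (by positivity), arctan_lt_pi_div_two _⟩

theorem arctanMulCot_arctanMulCot {α ψ : ℝ} (hα : α ≠ 0) (hψ : ψ ∈ Ioo (-(π / 2)) (π / 2)) :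
    arctanMulCot α (arctanMulCot α ψ) = ψ := by
  have hcot : α * (cos (arctanMulCot α ψ) / sin (arctanMulCot α ψ)) = tan ψ := by
    rw [← inv_div, ← tan_eq_sin_div_cos, arctanMulCot, tan_arctan, mul_inv, inv_div,
      ← mul_assoc, mul_inv_cancel₀ hα, one_mul, tan_eq_sin_div_cos]
  rw [arctanMulCot, hcot, arctan_tan hψ.1 hψ.2]

theorem hasDerivAt_arctanMulCot (α : ℝ) {ψ : ℝ} (hψ : sin ψ ≠ 0) :
    HasDerivAt (arctanMulCot α) (-(α / (α ^ 2 * cos ψ ^ 2 + sin ψ ^ 2))) ψ := by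
  have hD : α ^ 2 * cos ψ ^ 2 + sin ψ ^ 2 ≠ 0 := by positivity
  convert (((hasDerivAt_cos ψ).div (hasDerivAt_sin ψ) hψ).const_mul α).arctan using 1
  · rfl
  · rw [Pi.div_apply]
    field_simp
    linear_combination α * (α ^ 2 * cos ψ ^ 2 + sin ψ ^ 2) * Real.sin_sq_add_cos_sq ψ

theorem arccos_abs_sin_div_sqrt_eq_arctanMulCot {α φ : ℝ} (hα : 0 ≤ α)
    (hφ : φ ∈ Ioc 0 (π / 2)) :
    arccos (|sin φ| / √(α ^ 2 * cos φ ^ 2 + sin φ ^ 2)) = arctanMulCot α φ := by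
  have hs : 0 < sin φ := sin_pos_of_pos_of_lt_pi hφ.1 (by linarith [hφ.2, pi_pos])
  have hc : 0 ≤ cos φ := cos_nonneg_of_mem_Icc ⟨by linarith [hφ.1, pi_pos], hφ.2⟩
  have hsqrt : √(1 + (α * (cos φ / sin φ)) ^ 2) = √(α ^ 2 * cos φ ^ 2 + sin φ ^ 2) / sin φ := by
    have hsum : 1 + (α * (cos φ / sin φ)) ^ 2 = (α ^ 2 * cos φ ^ 2 + sin φ ^ 2) / sin φ ^ 2 := by
      field_simp
      ring
    rw [hsum, sqrt_div' _ (sq_nonneg _), sqrt_sq hs.le]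
  rw [arctanMulCot, arctan_eq_arccos (by positivity), hsqrt, inv_div, abs_of_pos hs]

theorem map_arctanMulCot_restrict_Ioo {α : ℝ} (hα : 0 < α) :
    (volume.restrict (Ioo 0 (π / 2))).map (arctanMulCot α) =
      (volume.restrict (Ioo 0 (π / 2))).withDensity
        fun ψ => ENNReal.ofReal (α / (α ^ 2 * cos ψ ^ 2 + sin ψ ^ 2)) := by
  have hsin : ∀ ψ ∈ Ioo 0 (π / 2), sin ψ ≠ 0 := fun ψ hψ =>
    (sin_pos_of_pos_of_lt_pi hψ.1 (by linarith [hψ.2, pi_pos])).ne'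
  rw [map_restrict_eq_withDensity_of_leftInvOn volume measurableSet_Ioo (mapsTo_arctanMulCot hα)
    (fun ψ hψ => arctanMulCot_arctanMulCot hα.ne' ⟨by linarith [hψ.1, pi_pos], hψ.2⟩)
    (fun ψ hψ => (hasDerivAt_arctanMulCot α (hsin ψ hψ)).hasFDerivAt.hasFDerivWithinAt)]
  congr 1
  funext ψ
  rw [ContinuousLinearMap.det_toSpanSingleton, abs_neg, abs_of_nonneg (by positivity)]

/-- For the pinwheel orientation map paired with the dipole spatial-frequency map
`cos(φ)/r^α`, the intersection angle at angular coordinate `φ` is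
`h(φ) = arccos(|sin φ|/√(α² cos²φ + sin²φ))`. Pushing forward the uniform probability
measure on `(0, π)` by `h` yields the measure with density
`ψ ↦ 2α/(π((α² − 1)cos²ψ + 1))` with respect to Lebesgue measure on `(0, π/2)`. -/
theorem angle_distribution_pushforward (α : ℝ) (hα : 0 < α) :
    Measure.map
        (fun φ : ℝ =>
          Real.arccos (|Real.sin φ| /
            Real.sqrt (α ^ 2 * Real.cos φ ^ 2 + Real.sin φ ^ 2)))
        (ENNReal.ofReal (1 / Real.pi) • volume.restrict (Set.Ioo 0 Real.pi)) =
      (volume.restrict (Set.Ioo 0 (Real.pi / 2))).withDensity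
        (fun ψ => ENNReal.ofReal
          (2 * α / (Real.pi * ((α ^ 2 - 1) * Real.cos ψ ^ 2 + 1)))) := by
  set h := fun φ : ℝ => arccos (|sin φ| / √(α ^ 2 * cos φ ^ 2 + sin φ ^ 2))
  have hmeas : Measurable h := by fun_prop
  have hsymm : ∀ φ, h (0 + π - φ) = h φ := fun φ => by
    simp only [h, zero_add, sin_pi_sub, cos_pi_sub, neg_sq]
  have heq : h =ᵐ[volume.restrict (Ioo 0 (π / 2))] arctanMulCot α :=
    (ae_restrict_iff' measurableSet_Ioo).2 <| ae_of_all _ fun φ hφ =>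
      arccos_abs_sin_div_sqrt_eq_arctanMulCot hα.le (Ioo_subset_Ioc_self hφ)
  rw [Measure.map_smul, map_restrict_Ioo_eq_two_smul_of_reflect hmeas pi_pos.le hsymm, zero_add,
    map_congr heq, map_arctanMulCot_restrict_Ioo hα, smul_smul,
    ← withDensity_smul' _ _ (by finiteness)]
  congr 1
  funext ψ
  have hdenom : α ^ 2 * cos ψ ^ 2 + sin ψ ^ 2 = (α ^ 2 - 1) * cos ψ ^ 2 + 1 := by
    rw [sin_sq]; ring
  rw [Pi.smul_apply, smul_eq_mul, hdenom, ← ENNReal.ofReal_ofNat 2,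
    ← ENNReal.ofReal_mul (by positivity), ← ENNReal.ofReal_mul (by positivity)]
  congr 1
  field_simp
end
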